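/- Let (Γ_Qual, Γ_Forb) be an access structure on Fin n with enumeration Γ_Qual = {Q_1, …, Q_t} and qualified matrix G. Let B0 and B_{11}, …, B_{1k} be t×m matrices over ZMod 2 such that each system G * X = B0 and G * X = B_{1j} is consistent, and suppose that the pair of multisets (k copies of S0, Σ_j S_{1j}), where S0 := {X : G * X = B0} and S_{1j} := {X : G * X = B_{1j}}, forms an XVCS for (Γ_Qual, Γ_Forb) (this is the linear-system form of a White-SemiSXVCS). Then for every j = 1, …, k, the pair (S0, S_{1j}) is an SXVCS for (Γ_Qual, Γ_Forb): w(row s of B0) < w(row s of B_{1j}) for every s, and {X[F] : X ∈ S0} = {X[F] : X ∈ S_{1j}} for every F ∈ Γ_Forb. In other words, every White-SemiSXVCS constructed from 2k linear systems decomposes into k SXVCSs. -/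

import Mathlib

open scoped Classical

noncomputable section

/-- Hamming weight of a vector over `ZMod 2`. -/
def wt {m : ℕ} (v : Fin m → ZMod 2) : ℕ :=
  (Finset.univ.filter fun j => v j = 1).card

/-- `⊕M[Q]` : XOR (sum over `ZMod 2`) of the rows of `M` with index in `Q`. -/
def xorRows {n m : ℕ} (M : Matrix (Fin n) (Fin m) (ZMod 2)) (Q : Finset (Fin n)) :
    Fin m → ZMod 2 :=
  fun j => ∑ i ∈ Q, M i j

/-- `M[F]` : restriction of `M` to the rows with index in `F`. -/
def rowRestrict {n m : ℕ} (F : Finset (Fin n)) (M : Matrix (Fin n) (Fin m) (ZMod 2)) :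
    {x // x ∈ F} → Fin m → ZMod 2 :=
  fun i j => M i.1 j

/-- An access structure: a nonempty family of nonempty subsets of `Fin n`. -/
def IsAccessStructure {n : ℕ} (ΓQual : Finset (Finset (Fin n))) : Prop :=
  ΓQual.Nonempty ∧ ∀ Q ∈ ΓQual, Q.Nonempty

/-- `Γ⁻` : minimal elements of `ΓQual` under inclusion. -/
def minQual {n : ℕ} (ΓQual : Finset (Finset (Fin n))) : Finset (Finset (Fin n)) :=
  ΓQual.filter fun Q => ∀ Q' ∈ ΓQual, Q' ⊆ Q → Q' = Q

/-- `Γ_Forb` : sets containing no minimal qualified set. -/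
def Forb {n : ℕ} (ΓQual : Finset (Finset (Fin n))) (F : Finset (Fin n)) : Prop :=
  ∀ Q ∈ minQual ΓQual, ¬ Q ⊆ F

/-- XVCS: contrast + security (same matrices with same frequencies, after
normalizing by the cardinalities). -/
def XVCS {n m : ℕ} (ΓQual : Finset (Finset (Fin n)))
    (C0 C1 : Multiset (Matrix (Fin n) (Fin m) (ZMod 2))) : Prop :=
  C0 ≠ 0 ∧ C1 ≠ 0 ∧
  (∀ Q ∈ ΓQual, ∀ M0 ∈ C0, ∀ M1 ∈ C1, wt (xorRows M0 Q) < wt (xorRows M1 Q)) ∧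
  ∀ F : Finset (Fin n), Forb ΓQual F →
    ∀ D : {x // x ∈ F} → Fin m → ZMod 2,
      Multiset.card C1 * (C0.map (rowRestrict F)).count D
        = Multiset.card C0 * (C1.map (rowRestrict F)).count D

/-- Static contrast condition of an SXVCS. -/
def StaticContrast {n m : ℕ} (ΓQual : Finset (Finset (Fin n)))
    (C0 C1 : Multiset (Matrix (Fin n) (Fin m) (ZMod 2))) : Prop :=
  ∀ Q ∈ ΓQual, ∃ E0 E1 : Fin m → ZMod 2,
    (∀ M ∈ C0, xorRows M Q = E0) ∧ (∀ M ∈ C1, xorRows M Q = E1) ∧ wt E0 < wt E1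

/-- SXVCS : an XVCS satisfying the static contrast condition. -/
def SXVCS {n m : ℕ} (ΓQual : Finset (Finset (Fin n)))
    (C0 C1 : Multiset (Matrix (Fin n) (Fin m) (ZMod 2))) : Prop :=
  XVCS ΓQual C0 C1 ∧ StaticContrast ΓQual C0 C1

/-- Perfect white pixel reconstruction. -/
def PerfectWhite {n m : ℕ} (ΓQual : Finset (Finset (Fin n)))
    (C0 : Multiset (Matrix (Fin n) (Fin m) (ZMod 2))) : Prop :=
  ∀ Q ∈ ΓQual, ∀ M ∈ C0, xorRows M Q = 0

/-- Average contrast of a scheme. -/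
def avgContrast {n m : ℕ} (ΓQual : Finset (Finset (Fin n)))
    (C0 C1 : Multiset (Matrix (Fin n) (Fin m) (ZMod 2))) : ℚ :=
  (∑ Q ∈ ΓQual,
      ((C1.map fun M => (wt (xorRows M Q) : ℚ)).sum / (Multiset.card C1 : ℚ)
        - (C0.map fun M => (wt (xorRows M Q) : ℚ)).sum / (Multiset.card C0 : ℚ)) / (m : ℚ))
    / (ΓQual.card : ℚ)

/-- PXVCS : probabilistic contrast condition + security. -/
def PXVCS {n m : ℕ} (ΓQual : Finset (Finset (Fin n)))
    (C0 C1 : Multiset (Matrix (Fin n) (Fin m) (ZMod 2))) : Prop :=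
  C0 ≠ 0 ∧ C1 ≠ 0 ∧
  (∀ Q ∈ ΓQual,
    (C0.map fun M => (wt (xorRows M Q) : ℚ)).sum / (Multiset.card C0 : ℚ)
      < (C1.map fun M => (wt (xorRows M Q) : ℚ)).sum / (Multiset.card C1 : ℚ)) ∧
  ∀ F : Finset (Fin n), Forb ΓQual F →
    ∀ D : {x // x ∈ F} → Fin m → ZMod 2,
      Multiset.card C1 * (C0.map (rowRestrict F)).count D
        = Multiset.card C0 * (C1.map (rowRestrict F)).count D

/-- Qualified matrix of an enumeration `Q : Fin t → Finset (Fin n)` of `ΓQual`. -/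
def qualMatrix {t n : ℕ} (Q : Fin t → Finset (Fin n)) : Matrix (Fin t) (Fin n) (ZMod 2) :=
  fun k i => if i ∈ Q k then 1 else 0

/-- Solution set of `G * X = B` as a multiset (each solution once). -/
def solMS {t n m : ℕ} (G : Matrix (Fin t) (Fin n) (ZMod 2))
    (B : Matrix (Fin t) (Fin m) (ZMod 2)) : Multiset (Matrix (Fin n) (Fin m) (ZMod 2)) :=
  (Finset.univ.filter fun X : Matrix (Fin n) (Fin m) (ZMod 2) => G * X = B).val

/-- Symmetric difference of a family: points in an odd number of members. -/
def symmDiffFam {n : ℕ} (S : Finset (Finset (Fin n))) : Finset (Fin n) :=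
  Finset.univ.filter fun i => Odd (S.filter fun A => i ∈ A).card

/-- The `(k,n)` threshold qualified family. -/
def qualK (n k : ℕ) : Finset (Finset (Fin n)) :=
  Finset.univ.filter fun Q : Finset (Fin n) => Q.card = k

section AuxStmt7

variable {t n m : ℕ}

lemma matAddSelf (A : Matrix (Fin t) (Fin m) (ZMod 2)) : A + A = 0 := by
  ext i j; exact CharTwo.add_self_eq_zero _

lemma matAddSelf' (A : Matrix (Fin n) (Fin m) (ZMod 2)) : A + A = 0 := by
  ext i j; exact CharTwo.add_self_eq_zero _

lemma rrAddSelf {F : Finset (Fin n)} (D : {x // x ∈ F} → Fin m → ZMod 2) : D + D = 0 := by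
  funext i j; exact CharTwo.add_self_eq_zero _

lemma rowRestrict_add (F : Finset (Fin n)) (X Y : Matrix (Fin n) (Fin m) (ZMod 2)) :
    rowRestrict F (X + Y) = rowRestrict F X + rowRestrict F Y := rfl

lemma mem_solMS (G : Matrix (Fin t) (Fin n) (ZMod 2))
    (B : Matrix (Fin t) (Fin m) (ZMod 2)) (X : Matrix (Fin n) (Fin m) (ZMod 2)) :
    X ∈ solMS G B ↔ G * X = B := by
  simp [solMS]

lemma count_map_solMS (G : Matrix (Fin t) (Fin n) (ZMod 2))
    (B : Matrix (Fin t) (Fin m) (ZMod 2)) (F : Finset (Fin n))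
    (D : {x // x ∈ F} → Fin m → ZMod 2) :
    ((solMS G B).map (rowRestrict F)).count D
      = (Finset.univ.filter fun X : Matrix (Fin n) (Fin m) (ZMod 2) =>
          G * X = B ∧ D = rowRestrict F X).card := by
  rw [Multiset.count_map, solMS, ← Finset.filter_val, Finset.filter_filter]
  rfl

lemma card_solMS (G : Matrix (Fin t) (Fin n) (ZMod 2))
    (B : Matrix (Fin t) (Fin m) (ZMod 2)) :
    Multiset.card (solMS G B)
      = (Finset.univ.filter fun X : Matrix (Fin n) (Fin m) (ZMod 2) => G * X = B).card := rfl

lemma countAux_eq (G : Matrix (Fin t) (Fin n) (ZMod 2))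
    {B B' : Matrix (Fin t) (Fin m) (ZMod 2)} (F : Finset (Fin n))
    {D D' : {x // x ∈ F} → Fin m → ZMod 2}
    {X0 X0' : Matrix (Fin n) (Fin m) (ZMod 2)}
    (hB : G * X0 = B) (hD : D = rowRestrict F X0)
    (hB' : G * X0' = B') (hD' : D' = rowRestrict F X0') :
    (Finset.univ.filter fun X : Matrix (Fin n) (Fin m) (ZMod 2) =>
        G * X = B ∧ D = rowRestrict F X).card
      = (Finset.univ.filter fun X : Matrix (Fin n) (Fin m) (ZMod 2) =>
        G * X = B' ∧ D' = rowRestrict F X).card := by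
  have hstep : ∀ (C C' : Matrix (Fin t) (Fin m) (ZMod 2))
      (E E' : {x // x ∈ F} → Fin m → ZMod 2)
      (Y Y' : Matrix (Fin n) (Fin m) (ZMod 2)),
      G * Y = C → E = rowRestrict F Y → G * Y' = C' → E' = rowRestrict F Y' →
      ∀ X, G * X = C ∧ E = rowRestrict F X →
        G * (X + (Y + Y')) = C' ∧ E' = rowRestrict F (X + (Y + Y')) := by
    intro C C' E E' Y Y' hC hE hC' hE' X hX
    constructor
    · rw [Matrix.mul_add, Matrix.mul_add, hX.1, hC, hC', ← add_assoc, matAddSelf, zero_add]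
    · rw [rowRestrict_add, rowRestrict_add, ← hX.2, hE, hE', ← add_assoc,
        rrAddSelf, zero_add]
  apply Finset.card_bij' (fun X _ => X + (X0 + X0')) (fun X _ => X + (X0 + X0'))
  · intro X hX
    simp only [Finset.mem_filter, Finset.mem_univ, true_and] at hX ⊢
    exact hstep B B' D D' X0 X0' hB hD hB' hD' X hX
  · intro X hX
    simp only [Finset.mem_filter, Finset.mem_univ, true_and] at hX ⊢
    rw [add_comm X0 X0']
    exact hstep B' B D' D X0' X0 hB' hD' hB hD X hX
  · intro X _
    rw [add_assoc, matAddSelf', add_zero]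
  · intro X _
    rw [add_assoc, matAddSelf', add_zero]

lemma cardAux_eq (G : Matrix (Fin t) (Fin n) (ZMod 2))
    {B B' : Matrix (Fin t) (Fin m) (ZMod 2)}
    {X0 X0' : Matrix (Fin n) (Fin m) (ZMod 2)}
    (hB : G * X0 = B) (hB' : G * X0' = B') :
    Multiset.card (solMS G B) = Multiset.card (solMS G B') := by
  rw [card_solMS, card_solMS]
  apply Finset.card_bij' (fun X _ => X + (X0 + X0')) (fun X _ => X + (X0 + X0'))
  · intro X hX
    simp only [Finset.mem_filter, Finset.mem_univ, true_and] at hX ⊢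
    rw [Matrix.mul_add, Matrix.mul_add, hX, hB, hB', ← add_assoc, matAddSelf, zero_add]
  · intro X hX
    simp only [Finset.mem_filter, Finset.mem_univ, true_and] at hX ⊢
    rw [Matrix.mul_add, Matrix.mul_add, hX, hB, hB', add_comm (B : _), ← add_assoc,
      matAddSelf, zero_add]
  · intro X _
    rw [add_assoc, matAddSelf', add_zero]
  · intro X _
    rw [add_assoc, matAddSelf', add_zero]

lemma xorRows_sol {G : Matrix (Fin t) (Fin n) (ZMod 2)} {Q : Fin t → Finset (Fin n)}
    (hG : G = qualMatrix Q)
    {B : Matrix (Fin t) (Fin m) (ZMod 2)} {X : Matrix (Fin n) (Fin m) (ZMod 2)}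
    (h : G * X = B) (s : Fin t) : xorRows X (Q s) = B s := by
  funext j
  have h1 : (G * X) s j = xorRows X (Q s) j := by
    simp [hG, Matrix.mul_apply, qualMatrix, xorRows, ite_mul, one_mul, zero_mul,
      Finset.sum_ite_mem, Finset.univ_inter]
  rw [← h1, h]

lemma map_msum {k : ℕ} {α β : Type*} (f : α → β) (S : Fin k → Multiset α) :
    Multiset.map f (∑ j, S j) = ∑ j, Multiset.map f (S j) := by
  induction (Finset.univ : Finset (Fin k)) using Finset.induction with
  | empty => simp
  | insert a s h ih => simp [Finset.sum_insert h, ih]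

lemma card_msum {k : ℕ} {α : Type*} (S : Fin k → Multiset α) :
    Multiset.card (∑ j, S j) = ∑ j, Multiset.card (S j) := by
  induction (Finset.univ : Finset (Fin k)) using Finset.induction with
  | empty => simp
  | insert a s h ih => simp [Finset.sum_insert h, ih]

end AuxStmt7


/-- every White-SemiSXVCS built from `2k` linear systems
(`k` copies of the white system `G*X = B0` together with the black systems
`G*X = B1 j`) decomposes into `k` SXVCSs. -/
theorem stmt7 {n m t k : ℕ} (ΓQual : Finset (Finset (Fin n)))
    (hA : IsAccessStructure ΓQual)
    (Q : Fin t → Finset (Fin n))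
    (hQmem : ∀ s, Q s ∈ ΓQual) (hQsurj : ∀ A ∈ ΓQual, ∃ s, Q s = A)
    (B0 : Matrix (Fin t) (Fin m) (ZMod 2))
    (B1 : Fin k → Matrix (Fin t) (Fin m) (ZMod 2))
    (h0 : ∃ X : Matrix (Fin n) (Fin m) (ZMod 2), qualMatrix Q * X = B0)
    (h1 : ∀ j, ∃ X : Matrix (Fin n) (Fin m) (ZMod 2), qualMatrix Q * X = B1 j)
    (hX : XVCS ΓQual (k • solMS (qualMatrix Q) B0)
        (∑ j : Fin k, solMS (qualMatrix Q) (B1 j))) :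
    ∀ j : Fin k,
      (∀ s : Fin t, wt (B0 s) < wt (B1 j s)) ∧
      (∀ F : Finset (Fin n), Forb ΓQual F →
        rowRestrict F '' {X : Matrix (Fin n) (Fin m) (ZMod 2) | qualMatrix Q * X = B0}
          = rowRestrict F '' {X : Matrix (Fin n) (Fin m) (ZMod 2) | qualMatrix Q * X = B1 j}) ∧
      SXVCS ΓQual (solMS (qualMatrix Q) B0) (solMS (qualMatrix Q) (B1 j)) := by
  classical
  obtain ⟨X0, hX0⟩ := h0
  choose X1 hX1 using h1
  set G := qualMatrix Q with hG
  obtain ⟨hC0ne, hC1ne, hcontrast, hsec⟩ := hX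
  have hk : k ≠ 0 := by
    rintro rfl
    exact hC0ne (zero_nsmul _)
  have hS0mem : X0 ∈ solMS G B0 := (mem_solMS G B0 X0).2 hX0
  have hS1mem : ∀ j, X1 j ∈ solMS G (B1 j) := fun j => (mem_solMS G (B1 j) (X1 j)).2 (hX1 j)
  have hS0ne : solMS G B0 ≠ 0 := fun h => by rw [h] at hS0mem; exact absurd hS0mem (by simp)
  have hS1ne : ∀ j, solMS G (B1 j) ≠ 0 := fun j h => by
    have := hS1mem j; rw [h] at this; exact absurd this (by simp)
  set N := Multiset.card (solMS G B0) with hNdef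
  have hN : 0 < N := Multiset.card_pos.2 hS0ne
  have hcard1 : ∀ j, Multiset.card (solMS G (B1 j)) = N := fun j =>
    cardAux_eq G (hX1 j) hX0
  -- contrast values
  have hwt : ∀ j (s : Fin t), wt (B0 s) < wt (B1 j s) := by
    intro j s
    have h0m : X0 ∈ k • solMS G B0 := Multiset.mem_nsmul.2 ⟨hk, hS0mem⟩
    have h1m : X1 j ∈ ∑ j', solMS G (B1 j') :=
      Multiset.mem_sum.2 ⟨j, Finset.mem_univ j, hS1mem j⟩
    have h := hcontrast (Q s) (hQmem s) X0 h0m (X1 j) h1m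
    rwa [xorRows_sol hG hX0 s, xorRows_sol hG (hX1 j) s] at h
  -- the key count equality
  have key : ∀ F : Finset (Fin n), Forb ΓQual F →
      ∀ D : {x // x ∈ F} → Fin m → ZMod 2, ∀ j,
      ((solMS G (B1 j)).map (rowRestrict F)).count D
        = ((solMS G B0).map (rowRestrict F)).count D := by
    intro F hF D
    have hsF := hsec F hF D
    rw [Multiset.map_nsmul, Multiset.count_nsmul, Multiset.card_nsmul,
      map_msum, Multiset.count_sum', card_msum] at hsF
    simp only [hcard1] at hsF
    rw [Finset.sum_const, Finset.card_univ, Fintype.card_fin, smul_eq_mul] at hsF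
    set c0 := ((solMS G B0).map (rowRestrict F)).count D with hc0def
    set c1 : Fin k → ℕ := fun j => ((solMS G (B1 j)).map (rowRestrict F)).count D with hc1def
    -- hsF : k * N * (k * c0) = k * N * ∑ j, c1 j   (mod ← hNdef)
    have star : k * c0 = ∑ j, c1 j := by
      have hkN : 0 < k * N := Nat.mul_pos (Nat.pos_of_ne_zero hk) hN
      exact Nat.eq_of_mul_eq_mul_left hkN hsF
    -- nonzero counts coincide
    have hwitness : ∀ (B' : Matrix (Fin t) (Fin m) (ZMod 2)),
        ((solMS G B').map (rowRestrict F)).count D ≠ 0 →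
        ∃ X, G * X = B' ∧ D = rowRestrict F X := by
      intro B' hne
      rw [count_map_solMS] at hne
      obtain ⟨X, hXmem⟩ := Finset.card_ne_zero.1 hne
      simp only [Finset.mem_filter, Finset.mem_univ, true_and] at hXmem
      exact ⟨X, hXmem⟩
    have heqOfPos : ∀ j, c1 j ≠ 0 → c0 ≠ 0 → c1 j = c0 := by
      intro j h1z h0z
      obtain ⟨Y, hY1, hY2⟩ := hwitness (B1 j) h1z
      obtain ⟨Z, hZ1, hZ2⟩ := hwitness B0 h0z
      show ((solMS G (B1 j)).map (rowRestrict F)).count D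
          = ((solMS G B0).map (rowRestrict F)).count D
      rw [count_map_solMS, count_map_solMS]
      exact countAux_eq G F hY1 hY2 hZ1 hZ2
    have h10 : ∀ j, c1 j ≠ 0 → c0 ≠ 0 := by
      intro j h1z h0z
      rw [h0z, Nat.mul_zero] at star
      exact h1z (by
        have := Finset.sum_eq_zero_iff.1 star.symm j (Finset.mem_univ j)
        exact this)
    intro j
    by_cases h0z : c0 = 0
    · by_cases h1z : c1 j = 0
      · rw [show ((solMS G (B1 j)).map (rowRestrict F)).count D = c1 j from rfl, h1z, h0z]
      · exact absurd h0z (h10 j h1z)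
    · -- c0 ≠ 0 : each c1 j' ≤ c0, and sum = k * c0 forces c1 j = c0
      have hle : ∀ j', c1 j' ≤ c0 := by
        intro j'
        by_cases h1z : c1 j' = 0
        · rw [h1z]; exact Nat.zero_le _
        · rw [heqOfPos j' h1z h0z]
      by_cases h1z : c1 j = 0
      · exfalso
        have hlt : ∑ j', c1 j' < ∑ _j' : Fin k, c0 := by
          apply Finset.sum_lt_sum (fun i _ => hle i)
          exact ⟨j, Finset.mem_univ j, by rw [h1z]; exact Nat.pos_of_ne_zero h0z⟩
        rw [Finset.sum_const, Finset.card_univ, Fintype.card_fin, smul_eq_mul, ← star] at hlt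
        exact lt_irrefl _ hlt
      · exact heqOfPos j h1z h0z
  -- image description
  have himage : ∀ F : Finset (Fin n), ∀ (B' : Matrix (Fin t) (Fin m) (ZMod 2))
      (D : {x // x ∈ F} → Fin m → ZMod 2),
      (D ∈ rowRestrict F '' {X : Matrix (Fin n) (Fin m) (ZMod 2) | G * X = B'}) ↔
        ((solMS G B').map (rowRestrict F)).count D ≠ 0 := by
    intro F B' D
    rw [count_map_solMS, ← Nat.pos_iff_ne_zero, Finset.card_pos]
    constructor
    · rintro ⟨X, hXm, rfl⟩
      exact ⟨X, Finset.mem_filter.2 ⟨Finset.mem_univ X, hXm, rfl⟩⟩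
    · rintro ⟨X, hXm⟩
      simp only [Finset.mem_filter, Finset.mem_univ, true_and] at hXm
      exact ⟨X, hXm.1, hXm.2.symm⟩
  intro j
  refine ⟨hwt j, ?_, ?_⟩
  · intro F hF
    ext D
    rw [himage F B0 D, himage F (B1 j) D, key F hF D j]
  · constructor
    · refine ⟨hS0ne, hS1ne j, ?_, ?_⟩
      · intro A hA M0 hM0 M1 hM1
        obtain ⟨s, rfl⟩ := hQsurj A hA
        rw [xorRows_sol hG ((mem_solMS G B0 M0).1 hM0) s,
          xorRows_sol hG ((mem_solMS G (B1 j) M1).1 hM1) s]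
        exact hwt j s
      · intro F hF D
        rw [key F hF D j, hcard1 j, ← hNdef]
    · intro A hA
      obtain ⟨s, rfl⟩ := hQsurj A hA
      refine ⟨B0 s, B1 j s, ?_, ?_, hwt j s⟩
      · intro M hM; exact xorRows_sol hG ((mem_solMS G B0 M).1 hM) s
      · intro M hM; exact xorRows_sol hG ((mem_solMS G (B1 j) M).1 hM) s
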